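/- For n ≥ 2, the automorphism group of the face lattice of the n-dimensional associahedron A_n is isomorphic to the dihedral group D_{n+3} of order 2(n+3), induced by the symmetries of the underlying (n+3)-gon. -/

import Mathlib

/-!
An order automorphism `f` of the poset of dissections preserves the number of diagonals
(the interval below a dissection with `k` diagonals has `2 ^ k` elements), so it permutes the
atoms `{d}` and hence the diagonals, preserving crossing, and acts on every dissection
diagonal-wise. A diagonal is short (cuts off one vertex `j`) iff no two diagonals crossing it
cross each other, since the diagonals crossing the short diagonal at `j` are exactly those
through `j`. So `f` permutes the short diagonals, inducing a map `τ` of the vertices, and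
two short diagonals cross iff their vertices are adjacent, so `τ` is an automorphism of the
boundary cycle: a rotation or a reflection `g`. Finally a diagonal is determined by the short
diagonals it crosses, so `f` is the action of `g`; and only the identity of `D_m` fixes all
short diagonals when `m ≥ 5`.
-/

namespace Colorful

/-- `x` lies strictly inside the (counterclockwise) arc from `a` to `b` of a convex
`m`-gon whose vertices are labeled by `ZMod m` in cyclic order. -/
def StrictArc (m : ℕ) (a b x : ZMod m) : Prop :=
  0 < (x - a).val ∧ (x - a).val < (b - a).val

/-- `d` is a diagonal of the convex `m`-gon: an unordered pair of distinct,
non-adjacent vertices. -/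
def IsDiag (m : ℕ) (d : Finset (ZMod m)) : Prop :=
  ∃ a b : ZMod m, d = {a, b} ∧ a ≠ b ∧ a ≠ b + 1 ∧ b ≠ a + 1

/-- Two diagonals of the convex `m`-gon cross (in their interiors). -/
def Cross (m : ℕ) (d e : Finset (ZMod m)) : Prop :=
  ∃ a b c c' : ZMod m, d = {a, b} ∧ e = {c, c'} ∧
    StrictArc m a b c ∧ StrictArc m b a c'

/-- A triangulation of the convex `m`-gon: a maximal family of pairwise
noncrossing diagonals; equivalently it consists of exactly `m - 3` diagonals. -/
def IsTriangulation (m : ℕ) (s : Finset (Finset (ZMod m))) : Prop :=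
  (∀ d ∈ s, IsDiag m d) ∧ (∀ d ∈ s, ∀ e ∈ s, d ≠ e → ¬ Cross m d e) ∧
    s.card = m - 3

/-- A (partial) dissection of the convex `m`-gon: a set of pairwise noncrossing
diagonals. The faces of the associahedron correspond to dissections, ordered by
reverse inclusion of the diagonal sets. -/
def Dissection (m : ℕ) (s : Finset (Finset (ZMod m))) : Prop :=
  (∀ d ∈ s, IsDiag m d) ∧ ∀ d ∈ s, ∀ e ∈ s, d ≠ e → ¬ Cross m d e

/-- A short diagonal: one whose endpoints are two steps apart on the boundary. -/
def IsShort (m : ℕ) (d : Finset (ZMod m)) : Prop :=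
  ∃ j : ZMod m, d = {j - 1, j + 1}

end Colorful

theorem Finset.pair_eq_pair_iff {α : Type*} [DecidableEq α] {a b c d : α} :
    ({a, b} : Finset α) = {c, d} ↔ a = c ∧ b = d ∨ a = d ∧ b = c := by
  rw [← Finset.coe_inj, Finset.coe_pair, Finset.coe_pair, Set.pair_eq_pair_iff]

def OrderIso.dualAutMulEquiv (α : Type*) [LE α] : (α ≃o α) ≃* (αᵒᵈ ≃o αᵒᵈ) where
  toFun := OrderIso.dual
  invFun f := f.dual
  left_inv _ := rfl
  right_inv _ := rfl
  map_mul' _ _ := rfl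

namespace ZMod

variable {m : ℕ}

theorem natCast_ne_zero_of_lt {k : ℕ} (h0 : 0 < k) (hk : k < m) : (k : ZMod m) ≠ 0 := by
  rw [Ne, natCast_eq_zero_iff]
  exact Nat.not_dvd_of_pos_of_lt h0 hk

theorem eq_natCast_of_val_eq [NeZero m] {z : ZMod m} {k : ℕ} (h : z.val = k) : z = k := by
  rw [← h, natCast_zmod_val]

theorem val_sub_add_val_sub [NeZero m] {a b : ZMod m} (h : a ≠ b) :
    (a - b).val + (b - a).val = m := by
  rw [← neg_sub, neg_val, if_neg (sub_ne_zero.2 h.symm)]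
  have := (b - a).val_lt
  omega

theorem two_le_val_sub [NeZero m] {a b : ZMod m} (hab : a ≠ b) (hba : b ≠ a + 1) :
    2 ≤ (b - a).val := by
  have h0 : (b - a).val ≠ 0 := by rwa [Ne, val_eq_zero, sub_eq_zero, eq_comm]
  have h1 : (b - a).val ≠ 1 := fun h => hba (by
    have := eq_natCast_of_val_eq h
    rw [Nat.cast_one] at this
    linear_combination this)
  omega

theorem eq_add_or_eq_sub_of_step [NeZero m] (h2 : (2 : ZMod m) ≠ 0)
    {τ : ZMod m → ZMod m} (hτ : Function.Injective τ)
    (hstep : ∀ x, τ (x + 1) = τ x + 1 ∨ τ (x + 1) = τ x - 1) :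
    (∀ x, τ x = τ 0 + x) ∨ ∀ x, τ x = τ 0 - x := by
  obtain ⟨ε, hε, h1⟩ : ∃ ε : ZMod m, (ε = 1 ∨ ε = -1) ∧ τ 1 = τ 0 + ε := by
    rcases hstep 0 with h | h
    · exact ⟨1, Or.inl rfl, by simpa using h⟩
    · exact ⟨-1, Or.inr rfl, by simpa [sub_eq_add_neg] using h⟩
  have hconst (k : ℕ) : τ ((k : ZMod m) + 1) = τ k + ε := by
    induction k with
    | zero => simpa using h1
    | succ k ih =>
      push_cast
      -- a step against the direction `ε` would return to `τ k`
      have hback : τ ((k : ZMod m) + 1 + 1) ≠ τ k := fun h => h2 (by linear_combination hτ h)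
      rcases hε with rfl | rfl <;> rcases hstep ((k : ZMod m) + 1) with h | h
      · exact h
      · exact absurd (by rw [h, ih]; ring) hback
      · exact absurd (by rw [h, ih]; ring) hback
      · rw [h]; ring
  have hlin (k : ℕ) : τ k = τ 0 + ε * k := by
    induction k with
    | zero => simp
    | succ k ih => push_cast; rw [hconst, ih]; ring
  have hall (x : ZMod m) : τ x = τ 0 + ε * x := by simpa using hlin x.val
  rcases hε with rfl | rfl
  · exact Or.inl fun x => by rw [hall]; ring
  · exact Or.inr fun x => by rw [hall]; ring

end ZMod

namespace Colorful

section Arcs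

variable {m : ℕ} {a b x : ZMod m}

namespace StrictArc

theorem ne_left (h : StrictArc m a b x) : x ≠ a := by
  rintro rfl
  simpa using h.1

theorem ne_right (h : StrictArc m a b x) : x ≠ b := by
  rintro rfl
  exact lt_irrefl _ h.2

theorem not_swap [NeZero m] (h : StrictArc m a b x) : ¬ StrictArc m b a x := by
  rintro ⟨hxb, hxba⟩
  obtain ⟨hxa, hxab⟩ := h
  have hab : a ≠ b := by
    rintro rfl
    simp at hxab
  have hsum := ZMod.val_sub_add_val_sub hab
  have hsplit : (x - a).val = (x - b).val + (b - a).val := by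
    rw [show x - a = (x - b) + (b - a) by ring]
    exact ZMod.val_add_of_lt (by omega)
  omega

theorem add_one [NeZero m] (h : StrictArc m a b x) (hx : x + 1 ≠ b) :
    StrictArc m a b (x + 1) := by
  obtain ⟨h0, hlt⟩ := h
  have hm := (b - a).val_lt
  have h1 : (1 : ZMod m).val = 1 := ZMod.val_one'' (by omega)
  have hval : (x + 1 - a).val = (x - a).val + 1 := by
    rw [show x + 1 - a = (x - a) + 1 by ring, ZMod.val_add_of_lt] <;> rw [h1]
    omega
  refine ⟨by omega, lt_of_le_of_ne (by omega) fun heq => hx ?_⟩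
  simpa using ZMod.val_injective m heq

theorem sub_one [NeZero m] (h : StrictArc m a b x) (hx : x - 1 ≠ a) :
    StrictArc m a b (x - 1) := by
  obtain ⟨h0, hlt⟩ := h
  have h1 : (1 : ZMod m).val = 1 := ZMod.val_one'' (by have := (b - a).val_lt; omega)
  have hval : (x - 1 - a).val = (x - a).val - 1 := by
    rw [show x - 1 - a = (x - a) - 1 by ring, ZMod.val_sub (by omega), h1]
  refine ⟨Nat.pos_of_ne_zero fun hz => hx ?_, by omega⟩
  rwa [ZMod.val_eq_zero, sub_eq_zero] at hz

theorem add_right (h : StrictArc m a b x) (c : ZMod m) :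
    StrictArc m (a + c) (b + c) (x + c) := by
  simpa only [StrictArc, add_sub_add_right_eq_sub] using h

theorem sub_left [NeZero m] (h : StrictArc m a b x) (c : ZMod m) :
    StrictArc m (c - b) (c - a) (c - x) := by
  simp only [StrictArc, sub_sub_sub_cancel_left]
  have hbx : 0 < (b - x).val := ZMod.val_pos.2 (sub_ne_zero.2 h.ne_right.symm)
  obtain ⟨h0, hlt⟩ := h
  have hsplit : b - a = (b - x) + (x - a) := by ring
  have := (b - x).val_lt
  by_cases hwrap : m ≤ (b - x).val + (x - a).val
  · rw [hsplit, ZMod.val_add_of_le hwrap] at hlt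
    omega
  · rw [hsplit, ZMod.val_add_of_lt (by omega)]
    omega

end StrictArc

theorem strictArc_add_natCast [NeZero m] {k : ℕ} (hk0 : 0 < k) (hk : k < (b - a).val) :
    StrictArc m a b (a + k) := by
  have := (b - a).val_lt
  rw [StrictArc, add_sub_cancel_left, ZMod.val_natCast_of_lt (by omega)]
  exact ⟨hk0, hk⟩

theorem strictArc_sub_one_right [NeZero m] (h : 2 ≤ (b - a).val) :
    StrictArc m a b (b - 1) := by
  have h1 : (1 : ZMod m).val = 1 := ZMod.val_one'' (by have := (b - a).val_lt; omega)
  rw [StrictArc, sub_right_comm, ZMod.val_sub (by omega), h1]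
  omega

theorem eq_of_strictArc_sub_one_add_one [NeZero m] {j : ZMod m}
    (h : StrictArc m (j - 1) (j + 1) x) : x = j := by
  obtain ⟨h0, hlt⟩ := h
  have h2 : (j + 1 - (j - 1)).val ≤ 2 := by
    rw [show j + 1 - (j - 1) = 2 by ring, ZMod.val_ofNat]
    exact Nat.mod_le _ _
  have := ZMod.eq_natCast_of_val_eq (show (x - (j - 1)).val = 1 by omega)
  rw [Nat.cast_one] at this
  linear_combination this

theorem eq_of_strictArc_sub_one [NeZero m] {j : ZMod m} (h₁ : StrictArc m a b (j - 1))
    (h₂ : StrictArc m b a (j + 1)) : j = b := by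
  by_contra hj
  have hab : StrictArc m a b j := by simpa using h₁.add_one (by simpa using hj)
  have hba : StrictArc m b a j := by simpa using h₂.sub_one (by simpa using hj)
  exact hab.not_swap hba

end Arcs

section Diagonals

variable {m : ℕ} {a b x : ZMod m} {d e : Finset (ZMod m)}

/-- `Cross` is stated for an ordered pair of diagonals; `Crossing` is its symmetrization. -/
def Crossing (m : ℕ) (d e : Finset (ZMod m)) : Prop := Cross m d e ∨ Cross m e d

theorem crossing_comm : Crossing m d e ↔ Crossing m e d := Or.comm

theorem Cross.disjoint (h : Cross m d e) : Disjoint d e := by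
  obtain ⟨a, b, c, c', rfl, rfl, hc, hc'⟩ := h
  simp [hc.ne_left, hc.ne_right, hc'.ne_left, hc'.ne_right]

theorem Crossing.disjoint (h : Crossing m d e) : Disjoint d e :=
  h.elim Cross.disjoint fun h => h.disjoint.symm

theorem not_crossing_of_mem (hd : x ∈ d) (he : x ∈ e) : ¬ Crossing m d e :=
  fun h => Finset.disjoint_left.1 h.disjoint hd he

theorem not_crossing_self : ¬ Crossing m d d := by
  intro h
  have hd : d.Nonempty := by
    obtain ⟨a, b, -, -, rfl, -⟩ | ⟨a, b, -, -, rfl, -⟩ := h <;>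
      exact Finset.insert_nonempty a {b}
  exact hd.ne_empty (disjoint_self.1 h.disjoint)

theorem isDiag_pair_iff : IsDiag m {a, b} ↔ a ≠ b ∧ a ≠ b + 1 ∧ b ≠ a + 1 := by
  constructor
  · rintro ⟨a', b', h, hne, h1, h2⟩
    rcases Finset.pair_eq_pair_iff.1 h with ⟨rfl, rfl⟩ | ⟨rfl, rfl⟩
    · exact ⟨hne, h1, h2⟩
    · exact ⟨hne.symm, h2, h1⟩
  · rintro ⟨hne, h1, h2⟩
    exact ⟨a, b, rfl, hne, h1, h2⟩

theorem IsDiag.pair_add (hd : IsDiag m {a, b}) (c : ZMod m) : IsDiag m {a + c, b + c} := by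
  obtain ⟨hab, hab1, hba1⟩ := isDiag_pair_iff.1 hd
  exact isDiag_pair_iff.2 ⟨fun h => hab (by linear_combination h),
    fun h => hab1 (by linear_combination h), fun h => hba1 (by linear_combination h)⟩

def shortDiag (j : ZMod m) : Finset (ZMod m) := {j - 1, j + 1}

theorem isDiag_shortDiag (hm : 4 ≤ m) (j : ZMod m) : IsDiag m (shortDiag j) := by
  have h (k : ℕ) (h0 : 0 < k) (hk : k < 4) : (k : ZMod m) ≠ 0 :=
    ZMod.natCast_ne_zero_of_lt h0 (by omega)
  refine isDiag_pair_iff.2 ⟨fun h' => h 2 two_pos (by norm_num) ?_,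
    fun h' => h 3 three_pos (by norm_num) ?_, fun h' => h 1 one_pos (by norm_num) ?_⟩
  · push_cast; linear_combination -h'
  · push_cast; linear_combination -h'
  · push_cast; linear_combination h'

theorem shortDiag_injective (hm : 5 ≤ m) : Function.Injective (shortDiag : ZMod m → _) := by
  intro j k h
  rcases Finset.pair_eq_pair_iff.1 h with ⟨h1, -⟩ | ⟨h1, h2⟩
  · linear_combination h1
  · have h4 : ((4 : ℕ) : ZMod m) ≠ 0 := ZMod.natCast_ne_zero_of_lt four_pos (by omega)
    exact absurd (by push_cast; linear_combination h2 - h1) h4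

theorem cross_pair_shortDiag_left [NeZero m] (hab : 2 ≤ (b - a).val) (hba : 2 ≤ (a - b).val) :
    Cross m {a, b} (shortDiag a) := by
  refine ⟨a, b, a + 1, a - 1, rfl, Finset.pair_comm _ _, ?_, strictArc_sub_one_right hba⟩
  simpa using strictArc_add_natCast (k := 1) one_pos (by omega)

theorem crossing_shortDiag_iff [NeZero m] {j : ZMod m} (hd : IsDiag m d) :
    Crossing m d (shortDiag j) ↔ j ∈ d := by
  obtain ⟨a, b, rfl, hab, hab1, hba1⟩ := hd
  have hab2 := ZMod.two_le_val_sub hab hba1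
  have hba2 := ZMod.two_le_val_sub hab.symm hab1
  constructor
  · rintro (⟨a', b', c, c', hd, he, hc, hc'⟩ | ⟨a', b', c, c', he, hd, hc, hc'⟩) <;>
      rw [hd] <;> rcases Finset.pair_eq_pair_iff.1 he with ⟨rfl, rfl⟩ | ⟨rfl, rfl⟩
    · simp [eq_of_strictArc_sub_one hc hc']
    · simp [eq_of_strictArc_sub_one hc' hc]
    · simp [eq_of_strictArc_sub_one_add_one hc]
    · simp [eq_of_strictArc_sub_one_add_one hc']
  · intro hj
    rcases Finset.mem_insert.1 hj with rfl | hj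
    · exact Or.inl (cross_pair_shortDiag_left hab2 hba2)
    · rw [Finset.mem_singleton.1 hj, Finset.pair_comm]
      exact Or.inl (cross_pair_shortDiag_left hba2 hab2)

theorem isShort_pair_of_val_sub_eq_two [NeZero m] (h : (b - a).val = 2) :
    IsShort m {a, b} := by
  have hb : b - a = ((2 : ℕ) : ZMod m) := ZMod.eq_natCast_of_val_eq h
  push_cast at hb
  exact ⟨a + 1, by rw [show b = a + 1 + 1 by linear_combination hb, add_sub_cancel_right]⟩

theorem isShort_iff_forall_crossing [NeZero m] (hd : IsDiag m d) :
    IsShort m d ↔ ∀ e₁ e₂, IsDiag m e₁ → IsDiag m e₂ →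
      Crossing m d e₁ → Crossing m d e₂ → ¬ Crossing m e₁ e₂ := by
  constructor
  · rintro ⟨j, rfl⟩ e₁ e₂ he₁ he₂ h₁ h₂
    exact not_crossing_of_mem ((crossing_shortDiag_iff he₁).1 (crossing_comm.1 h₁))
      ((crossing_shortDiag_iff he₂).1 (crossing_comm.1 h₂))
  · intro h
    by_contra hshort
    obtain ⟨a, b, rfl, hab, hab1, hba1⟩ := hd
    have hab3 : 3 ≤ (b - a).val := by
      have := ZMod.two_le_val_sub hab hba1
      have : (b - a).val ≠ 2 := fun h2 => hshort (isShort_pair_of_val_sub_eq_two h2)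
      omega
    have hba3 : 3 ≤ (a - b).val := by
      have := ZMod.two_le_val_sub hab.symm hab1
      have : (a - b).val ≠ 2 := fun h2 =>
        hshort (Finset.pair_comm a b ▸ isShort_pair_of_val_sub_eq_two h2)
      omega
    have h1 : StrictArc m a b (a + 1) := by simpa using strictArc_add_natCast one_pos (by omega)
    have h1' : StrictArc m b a (b + 1) := by simpa using strictArc_add_natCast one_pos (by omega)
    have h2 : StrictArc m a b (a + 2) := by simpa using strictArc_add_natCast two_pos (by omega)
    have h2' : StrictArc m b a (b + 2) := by simpa using strictArc_add_natCast two_pos (by omega)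
    -- the rotations of `{a, b}` by one and by two steps both cross it and each other
    have hd := isDiag_pair_iff.2 ⟨hab, hab1, hba1⟩
    refine h {a + 1, b + 1} {a + 2, b + 2} (hd.pair_add 1) (hd.pair_add 2)
      (Or.inl ⟨_, _, _, _, rfl, rfl, h1, h1'⟩) (Or.inl ⟨_, _, _, _, rfl, rfl, h2, h2'⟩)
      (Or.inl ⟨_, _, _, _, rfl, rfl, ?_, ?_⟩)
    · simpa [add_assoc, one_add_one_eq_two] using h1.add_right 1
    · simpa [add_assoc, one_add_one_eq_two] using h1'.add_right 1

end Diagonals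

section Dissections

variable {m : ℕ} {d e : Finset (ZMod m)} {s t : Finset (Finset (ZMod m))}

theorem dissection_iff :
    Dissection m s ↔ (∀ d ∈ s, IsDiag m d) ∧ ∀ d ∈ s, ∀ e ∈ s, ¬ Crossing m d e := by
  refine and_congr_right fun _ => ⟨fun h d hd e he hde => ?_, fun h d hd e he _ hde =>
    h d hd e he (Or.inl hde)⟩
  obtain rfl | hne := eq_or_ne d e
  · exact not_crossing_self hde
  · exact hde.elim (h d hd e he hne) (h e he d hd hne.symm)

theorem Dissection.mono (hs : Dissection m s) (h : t ⊆ s) : Dissection m t :=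
  ⟨fun d hd => hs.1 d (h hd), fun d hd e he => hs.2 d (h hd) e (h he)⟩

theorem dissection_singleton (hd : IsDiag m d) : Dissection m {d} :=
  dissection_iff.2 ⟨by simpa using hd, by simpa using not_crossing_self⟩

theorem dissection_pair_iff (hd : IsDiag m d) (he : IsDiag m e) :
    Dissection m {d, e} ↔ ¬ Crossing m d e := by
  simp [dissection_iff, hd, he, not_crossing_self, crossing_comm (d := e)]

abbrev Dissections (m : ℕ) := {s : Finset (Finset (ZMod m)) // Dissection m s}

theorem natCard_Iic (s : Dissections m) : Nat.card (Set.Iic s) = 2 ^ s.1.card := by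
  let toPowerset : Set.Iic s ≃ s.1.powerset :=
    { toFun := fun t => ⟨t.1.1, Finset.mem_powerset.2 t.2⟩
      invFun := fun t => ⟨⟨t.1, s.2.mono (Finset.mem_powerset.1 t.2)⟩,
        Finset.mem_powerset.1 t.2⟩
      left_inv := fun _ => rfl
      right_inv := fun _ => rfl }
  rw [Nat.card_congr toPowerset, Nat.card_eq_fintype_card, Fintype.card_coe,
    Finset.card_powerset]

end Dissections

namespace DissectionAut

variable {m : ℕ} {d e : Finset (ZMod m)} (f : Dissections m ≃o Dissections m)

theorem card_apply (s : Dissections m) : (f s).1.card = s.1.card := by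
  have h := natCard_Iic (f s)
  rw [← f.image_Iic, Nat.card_image_of_injective f.injective, natCard_Iic] at h
  exact (Nat.pow_right_injective le_rfl h).symm

theorem exists_apply_singleton (hd : IsDiag m d) :
    ∃ e, (f ⟨{d}, dissection_singleton hd⟩).1 = {e} :=
  Finset.card_eq_one.1 (by rw [card_apply, Finset.card_singleton])

open Classical in
/-- The permutation of the diagonals induced by `f` on the atoms `{d}` (the identity off the
diagonals). -/
noncomputable def diagMap (d : Finset (ZMod m)) : Finset (ZMod m) :=
  if hd : IsDiag m d then (exists_apply_singleton f hd).choose else d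

theorem apply_singleton (hd : IsDiag m d) :
    (f ⟨{d}, dissection_singleton hd⟩).1 = {diagMap f d} := by
  rw [diagMap, dif_pos hd]
  exact (exists_apply_singleton f hd).choose_spec

theorem isDiag_diagMap (hd : IsDiag m d) : IsDiag m (diagMap f d) :=
  (f ⟨{d}, dissection_singleton hd⟩).2.1 _ (by simp [apply_singleton f hd])

theorem diagMap_injOn : Set.InjOn (diagMap f) {d | IsDiag m d} := by
  intro d hd e he h
  have := f.injective (Subtype.ext (by rw [apply_singleton f hd, apply_singleton f he, h]) :
    f ⟨{d}, dissection_singleton hd⟩ = f ⟨{e}, dissection_singleton he⟩)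
  exact Finset.singleton_injective (congrArg Subtype.val this)

theorem apply_val (s : Dissections m) : (f s).1 = s.1.image (diagMap f) := by
  refine (Finset.eq_of_subset_of_card_le (fun e he => ?_) ?_).symm
  · obtain ⟨d, hd, rfl⟩ := Finset.mem_image.1 he
    have hle : (⟨{d}, dissection_singleton (s.2.1 d hd)⟩ : Dissections m) ≤ s :=
      Finset.singleton_subset_iff.2 hd
    have := f.monotone hle
    rw [Subtype.mk_le_mk, apply_singleton f (s.2.1 d hd)] at this
    exact Finset.singleton_subset_iff.1 this
  · rw [card_apply, Finset.card_image_of_injOn ((diagMap_injOn f).mono fun d hd => s.2.1 d hd)]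

theorem diagMap_diagMap_symm (hd : IsDiag m d) : diagMap f (diagMap f.symm d) = d := by
  have h := apply_val f (f.symm ⟨{d}, dissection_singleton hd⟩)
  rw [f.apply_symm_apply, apply_singleton f.symm hd, Finset.image_singleton] at h
  exact (Finset.singleton_injective h).symm

theorem diagMap_symm_diagMap (hd : IsDiag m d) : diagMap f.symm (diagMap f d) = d :=
  diagMap_diagMap_symm f.symm hd

theorem not_crossing_diagMap (hd : IsDiag m d) (he : IsDiag m e) (h : ¬ Crossing m d e) :
    ¬ Crossing m (diagMap f d) (diagMap f e) := by
  have hde := (f ⟨{d, e}, (dissection_pair_iff hd he).2 h⟩).2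
  rw [apply_val, Finset.image_insert, Finset.image_singleton] at hde
  exact (dissection_pair_iff (isDiag_diagMap f hd) (isDiag_diagMap f he)).1 hde

theorem crossing_diagMap_iff (hd : IsDiag m d) (he : IsDiag m e) :
    Crossing m (diagMap f d) (diagMap f e) ↔ Crossing m d e := by
  refine ⟨not_imp_not.1 (not_crossing_diagMap f hd he), not_imp_not.1 fun h => ?_⟩
  simpa only [diagMap_symm_diagMap f hd, diagMap_symm_diagMap f he] using
    not_crossing_diagMap f.symm (isDiag_diagMap f hd) (isDiag_diagMap f he) h

theorem isShort_diagMap [NeZero m] (hd : IsDiag m d) (hs : IsShort m d) :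
    IsShort m (diagMap f d) := by
  rw [isShort_iff_forall_crossing (isDiag_diagMap f hd)]
  intro e₁ e₂ he₁ he₂ h₁ h₂
  have he₁' := isDiag_diagMap f.symm he₁
  have he₂' := isDiag_diagMap f.symm he₂
  rw [← diagMap_diagMap_symm f he₁, crossing_diagMap_iff f hd he₁'] at h₁
  rw [← diagMap_diagMap_symm f he₂, crossing_diagMap_iff f hd he₂'] at h₂
  rw [← diagMap_diagMap_symm f he₁, ← diagMap_diagMap_symm f he₂,
    crossing_diagMap_iff f he₁' he₂']
  exact (isShort_iff_forall_crossing hd).1 hs _ _ he₁' he₂' h₁ h₂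

open Classical in
noncomputable def vertexMap (j : ZMod m) : ZMod m :=
  if h : IsShort m (diagMap f (shortDiag j)) then h.choose else j

theorem diagMap_shortDiag (hm : 4 ≤ m) (j : ZMod m) :
    diagMap f (shortDiag j) = shortDiag (vertexMap f j) := by
  have : NeZero m := ⟨by omega⟩
  have h := isShort_diagMap f (isDiag_shortDiag hm j) ⟨j, rfl⟩
  rw [vertexMap, dif_pos h]
  exact h.choose_spec

theorem vertexMap_injective (hm : 5 ≤ m) : Function.Injective (vertexMap f) := by
  intro j k h
  apply shortDiag_injective hm
  apply diagMap_injOn f (isDiag_shortDiag (by omega) j) (isDiag_shortDiag (by omega) k)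
  rw [diagMap_shortDiag f (by omega), diagMap_shortDiag f (by omega), h]

theorem vertexMap_add_one (hm : 4 ≤ m) (j : ZMod m) :
    vertexMap f (j + 1) = vertexMap f j + 1 ∨ vertexMap f (j + 1) = vertexMap f j - 1 := by
  have : NeZero m := ⟨by omega⟩
  have hj : Crossing m (shortDiag (j + 1)) (shortDiag j) :=
    (crossing_shortDiag_iff (isDiag_shortDiag hm _)).2 (by simp [shortDiag])
  rw [← crossing_diagMap_iff f (isDiag_shortDiag hm _) (isDiag_shortDiag hm _),
    diagMap_shortDiag f hm, diagMap_shortDiag f hm,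
    crossing_shortDiag_iff (isDiag_shortDiag hm _), shortDiag] at hj
  simp only [Finset.mem_insert, Finset.mem_singleton] at hj
  rcases hj with h | h
  · exact Or.inl (by linear_combination -h)
  · exact Or.inr (by linear_combination -h)

theorem diagMap_eq_map (hm : 4 ≤ m) {σ : Equiv.Perm (ZMod m)} (hσ : ∀ j, vertexMap f j = σ j)
    (hd : IsDiag m d) : diagMap f d = d.map σ.toEmbedding := by
  have : NeZero m := ⟨by omega⟩
  ext k
  have hk : shortDiag k = diagMap f (shortDiag (σ.symm k)) := by
    rw [diagMap_shortDiag f hm, hσ, Equiv.apply_symm_apply]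
  rw [Finset.mem_map_equiv, ← crossing_shortDiag_iff (isDiag_diagMap f hd), hk,
    crossing_diagMap_iff f hd (isDiag_shortDiag hm _), crossing_shortDiag_iff hd]

end DissectionAut

section Dihedral

open DihedralGroup

variable {m : ℕ} {d e : Finset (ZMod m)} {s : Finset (Finset (ZMod m))}

def vertexPerm : DihedralGroup m →* Equiv.Perm (ZMod m) where
  toFun
    | r i => Equiv.subRight i
    | sr i => Equiv.subLeft i
  map_one' := by ext x; simp [one_def, - r_zero]
  map_mul' g h := by
    cases g <;> cases h <;> ext x <;>
      simp [r_mul_r, r_mul_sr, sr_mul_r, sr_mul_sr, Equiv.Perm.mul_apply] <;> ring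

@[simp] theorem vertexPerm_r (i x : ZMod m) : vertexPerm (r i) x = x - i := rfl

@[simp] theorem vertexPerm_sr (i x : ZMod m) : vertexPerm (sr i) x = i - x := rfl

theorem vertexPerm_injective (hm : 2 < m) : Function.Injective (vertexPerm (m := m)) := by
  refine (injective_iff_map_eq_one _).2 fun g hg => ?_
  have hfix (x : ZMod m) : vertexPerm g x = x := by rw [hg]; rfl
  cases g with
  | r i => simpa [one_def, - r_zero] using hfix 0
  | sr i =>
    have h2 : ((2 : ℕ) : ZMod m) ≠ 0 := ZMod.natCast_ne_zero_of_lt two_pos hm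
    have h0 := hfix 0
    have h1 := hfix 1
    simp only [vertexPerm_sr, sub_zero] at h0 h1
    exact absurd (by push_cast; linear_combination h0 - h1) h2

variable (g : DihedralGroup m)

theorem map_vertexPerm_inv (d : Finset (ZMod m)) :
    (d.map (vertexPerm g).toEmbedding).map (vertexPerm g⁻¹).toEmbedding = d := by
  ext x
  simp [map_inv, Equiv.Perm.inv_def]

theorem map_vertexPerm_shortDiag (j : ZMod m) :
    (shortDiag j).map (vertexPerm g).toEmbedding = shortDiag (vertexPerm g j) := by
  cases g with
  | r i => simp [shortDiag, sub_right_comm, add_sub_right_comm]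
  | sr i =>
    simp only [shortDiag, Finset.map_insert, Finset.map_singleton, Equiv.coe_toEmbedding,
      vertexPerm_sr]
    rw [show i - (j - 1) = i - j + 1 by ring, show i - (j + 1) = i - j - 1 by ring,
      Finset.pair_comm]

theorem IsDiag.map_vertexPerm (hd : IsDiag m d) :
    IsDiag m (d.map (vertexPerm g).toEmbedding) := by
  obtain ⟨a, b, rfl, hd⟩ := hd
  simp only [Finset.map_insert, Finset.map_singleton, Equiv.coe_toEmbedding]
  cases g with
  | r i =>
    simpa [sub_eq_add_neg] using (isDiag_pair_iff.2 hd).pair_add (-i)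
  | sr i =>
    obtain ⟨hab, hab1, hba1⟩ := hd
    simp only [vertexPerm_sr]
    exact isDiag_pair_iff.2 ⟨fun h => hab (by simpa using h),
      fun h => hba1 (by linear_combination h), fun h => hab1 (by linear_combination h)⟩

theorem Cross.map_vertexPerm [NeZero m] (h : Cross m d e) :
    Cross m (d.map (vertexPerm g).toEmbedding) (e.map (vertexPerm g).toEmbedding) := by
  obtain ⟨a, b, c, c', rfl, rfl, hc, hc'⟩ := h
  simp only [Finset.map_insert, Finset.map_singleton, Equiv.coe_toEmbedding]
  cases g with
  | r i =>
    simp only [vertexPerm_r, sub_eq_add_neg]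
    exact ⟨_, _, _, _, rfl, rfl, hc.add_right (-i), hc'.add_right (-i)⟩
  | sr i => exact ⟨_, _, _, _, Finset.pair_comm _ _, rfl, hc.sub_left i, hc'.sub_left i⟩

theorem isDiag_map_vertexPerm_iff :
    IsDiag m (d.map (vertexPerm g).toEmbedding) ↔ IsDiag m d :=
  ⟨fun h => by simpa only [map_vertexPerm_inv] using h.map_vertexPerm g⁻¹,
    (·.map_vertexPerm g)⟩

theorem crossing_map_vertexPerm_iff [NeZero m] :
    Crossing m (d.map (vertexPerm g).toEmbedding) (e.map (vertexPerm g).toEmbedding) ↔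
      Crossing m d e := by
  have hmap {d e : Finset (ZMod m)} (g : DihedralGroup m) (h : Crossing m d e) :
      Crossing m (d.map (vertexPerm g).toEmbedding) (e.map (vertexPerm g).toEmbedding) :=
    h.imp (·.map_vertexPerm g) (·.map_vertexPerm g)
  exact ⟨fun h => by simpa only [map_vertexPerm_inv] using hmap g⁻¹ h, hmap g⟩

theorem dissection_map_vertexPerm_iff [NeZero m] :
    Dissection m (s.map (vertexPerm g).finsetCongr.toEmbedding) ↔ Dissection m s := by
  simp only [dissection_iff, Finset.forall_mem_map, Equiv.coe_toEmbedding,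
    Equiv.finsetCongr_apply, isDiag_map_vertexPerm_iff, crossing_map_vertexPerm_iff]

variable [NeZero m]

def dihedralAut : DihedralGroup m →* (Dissections m ≃o Dissections m) where
  toFun g :=
    { toEquiv := (vertexPerm g).finsetCongr.finsetCongr.subtypeEquiv fun _ =>
        (dissection_map_vertexPerm_iff g).symm
      map_rel_iff' := Finset.map_subset_map }
  map_one' := by
    refine DFunLike.ext _ _ fun s => Subtype.ext ?_
    simp only [map_one, Equiv.Perm.one_def, Equiv.finsetCongr_refl]
    rfl
  map_mul' g h := by
    refine DFunLike.ext _ _ fun s => Subtype.ext ?_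
    simp only [map_mul, Equiv.Perm.mul_def, ← Equiv.finsetCongr_trans]
    rfl

theorem dihedralAut_apply_val (s : Dissections m) :
    (dihedralAut g s).1 = s.1.map (vertexPerm g).finsetCongr.toEmbedding := rfl

theorem dihedralAut_injective (hm : 5 ≤ m) : Function.Injective (dihedralAut (m := m)) := by
  refine (injective_iff_map_eq_one _).2 fun g hg => vertexPerm_injective (by omega) ?_
  rw [map_one]
  refine Equiv.ext fun j => shortDiag_injective hm ?_
  have hfix := congrArg Subtype.val (DFunLike.congr_fun hg
    ⟨{shortDiag j}, dissection_singleton (isDiag_shortDiag (by omega) j)⟩)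
  simp only [dihedralAut_apply_val, Finset.map_singleton, Equiv.coe_toEmbedding,
    Equiv.finsetCongr_apply, map_vertexPerm_shortDiag] at hfix
  exact Finset.singleton_injective hfix

theorem exists_vertexPerm_eq_vertexMap (hm : 5 ≤ m) (f : Dissections m ≃o Dissections m) :
    ∃ g, ∀ j, DissectionAut.vertexMap f j = vertexPerm g j := by
  have h2 : (2 : ZMod m) ≠ 0 := by exact_mod_cast ZMod.natCast_ne_zero_of_lt two_pos (by omega)
  rcases ZMod.eq_add_or_eq_sub_of_step h2 (DissectionAut.vertexMap_injective f hm)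
    (DissectionAut.vertexMap_add_one f (by omega)) with h | h
  · exact ⟨r (-DissectionAut.vertexMap f 0), fun j => by rw [h, vertexPerm_r]; ring⟩
  · exact ⟨sr (DissectionAut.vertexMap f 0), h⟩

theorem dihedralAut_surjective (hm : 5 ≤ m) : Function.Surjective (dihedralAut (m := m)) := by
  intro f
  obtain ⟨g, hg⟩ := exists_vertexPerm_eq_vertexMap hm f
  refine ⟨g, DFunLike.ext _ _ fun s => Subtype.ext ?_⟩
  rw [dihedralAut_apply_val, DissectionAut.apply_val, Finset.map_eq_image]
  exact Finset.image_congr fun d hd =>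
    (DissectionAut.diagMap_eq_map f (by omega) hg (s.2.1 d hd)).symm

end Dihedral

/-- For `n ≥ 2`, the automorphism group of the face lattice of
the associahedron `A_n` — order automorphisms of the poset of dissections of
the `(n+3)`-gon ordered by reverse inclusion — is isomorphic to the dihedral
group `D_{n+3}` of order `2(n+3)`. -/
theorem associahedron_aut_group (n : ℕ) (hn : 2 ≤ n) :
    Nonempty
      ((({s : Finset (Finset (ZMod (n + 3))) // Dissection (n + 3) s}ᵒᵈ) ≃o
        ({s : Finset (Finset (ZMod (n + 3))) // Dissection (n + 3) s}ᵒᵈ)) ≃*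
        DihedralGroup (n + 3)) := by
  have hm : 5 ≤ n + 3 := by omega
  exact ⟨(OrderIso.dualAutMulEquiv _).symm.trans
    (MulEquiv.ofBijective dihedralAut ⟨dihedralAut_injective hm, dihedralAut_surjective hm⟩).symm⟩

end Colorful
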